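/- arXiv:1106.4770 — 3 statements merged into one kernel-verified Lean document; each statement's English description precedes it below -/
import Mathlib

section
/- Let 1 ≤ m ≤ n−3, and let 0 ≤ p ≤ m and 0 ≤ q ≤ n satisfy m+1 ≤ p+q ≤ n−2. Then Sylv^{p,q}(A,B) = 0. -/
open Polynomial Finset

noncomputable section

variable {F : Type*} [Field F]

/-- Coefficient of a polynomial at an integer index (0 for negative indices). -/
def coeffZ (f : F[X]) (z : ℤ) : F := if 0 ≤ z then f.coeff z.toNat else 0

/-- The `(m+n-2k) × (m+n-2k)` matrix `M_k(f,g)` whose determinant is the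
`k`-th subresultant of `f` (of degree `m`) and `g` (of degree `n`). -/
def sresM (m n k : ℕ) (f g : F[X]) :
    Matrix (Fin (m + n - 2*k)) (Fin (m + n - 2*k)) F[X] := fun i j =>
  if (j : ℕ) = m + n - 2*k - 1 then
    if (i : ℕ) < n - k then X ^ (n - k - 1 - (i : ℕ)) * f
    else X ^ (m - k - 1 - ((i : ℕ) - (n - k))) * g
  else
    if (i : ℕ) < n - k then C (coeffZ f ((m : ℤ) + (i : ℕ) - (j : ℕ)))
    else C (coeffZ g ((k : ℤ) + (i : ℕ) - (j : ℕ)))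

/-- `M_k(f,g)` with the last column replaced by `(x^{n-k-1},…,x^0,0,…,0)ᵀ`. -/
def sresMF (m n k : ℕ) (f g : F[X]) :
    Matrix (Fin (m + n - 2*k)) (Fin (m + n - 2*k)) F[X] := fun i j =>
  if (j : ℕ) = m + n - 2*k - 1 then
    if (i : ℕ) < n - k then X ^ (n - k - 1 - (i : ℕ)) else 0
  else sresM m n k f g i j

/-- `M_k(f,g)` with the last column replaced by `(0,…,0,x^{m-k-1},…,x^0)ᵀ`. -/
def sresMG (m n k : ℕ) (f g : F[X]) :
    Matrix (Fin (m + n - 2*k)) (Fin (m + n - 2*k)) F[X] := fun i j =>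
  if (j : ℕ) = m + n - 2*k - 1 then
    if (i : ℕ) < n - k then 0 else X ^ (m - k - 1 - ((i : ℕ) - (n - k)))
  else sresM m n k f g i j

/-- The `k`-th subresultant `Sres_k(f,g)` w.r.t. degrees `m`, `n`. -/
def Sres (m n k : ℕ) (f g : F[X]) : F[X] := (sresM m n k f g).det

/-- The polynomial `F_k(f,g)` w.r.t. degrees `m`, `n`. -/
def Fk (m n k : ℕ) (f g : F[X]) : F[X] := (sresMF m n k f g).det

/-- The polynomial `G_k(f,g)` w.r.t. degrees `m`, `n`. -/
def Gk (m n k : ℕ) (f g : F[X]) : F[X] := (sresMG m n k f g).det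

/-- `R(Y,Z) = ∏_{y ∈ Y, z ∈ Z} (y - z)`. -/
def Rp {ι κ : Type*} (a : ι → F) (b : κ → F) (S : Finset ι) (T : Finset κ) : F :=
  ∏ i ∈ S, ∏ j ∈ T, (a i - b j)

/-- `R(x,Y) = ∏_{y ∈ Y} (x - y)` as a polynomial. -/
def RX {ι : Type*} (a : ι → F) (S : Finset ι) : F[X] :=
  ∏ i ∈ S, (X - C (a i))

/-- Sylvester's double sum `Sylv^{p,q}(A,B)`. -/
def sylv {m n : ℕ} (A : Fin m → F) (B : Fin n → F) (p q : ℕ) : F[X] :=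
  ∑ S ∈ (univ : Finset (Fin m)).powersetCard p,
    ∑ T ∈ (univ : Finset (Fin n)).powersetCard q,
      C ((Rp A B S T * Rp A B Sᶜ Tᶜ) / (Rp A A S Sᶜ * Rp B B T Tᶜ)) *
        (RX A S * RX B T)

end

/-! With `P = ∏_{a ∈ A'} (a - x)` and `Q = ∏_{a ∈ A ∖ A'} (a - x)`, the double sum is
`∑_{A'} R(x, A') / R(A', A ∖ A') · Φ_{A'}`, where `Φ_{A'} = ∑_{|B'| = q} w_B(B') R(x, B')` and
`w_U(T) = P(T) Q(U ∖ T) / R(T, U ∖ T)`, writing `P(T) = ∏_{t ∈ T} P(t)`. Now `Φ_{A'}` has degree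
`q < n`, and at `x = β_j` the terms with `β_j ∈ B'` vanish while the others add up to `± Q(β_j)`
times the single sum `∑_{|T| = q} w_U(T)` over `U = B ∖ {β_j}`. So it suffices that single sums
vanish when `deg P + q < |U|` and `deg Q < q`.

For that, write `U = V ∪ {z}`. The polynomial
`(-1)^q Q · ∑_{|T| = q} w_V(T) R(x, V ∖ T) + P · ∑_{|T| = q - 1} w_V(T) R(x, T)`
has degree `< |V|`, and at each `v ∈ V` its two parts are `± P(v) Q(v)` times the same single
sum over `V ∖ {v}`, with opposite signs. Hence it is zero, while its value at `z` is `R(z, V)`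
times the single sum over `U`. -/

noncomputable section SingleSum

variable {F : Type*} [Field F] {ι : Type*}

lemma eval_RX (c : ι → F) (S : Finset ι) (x : F) : (RX c S).eval x = ∏ i ∈ S, (x - c i) := by
  simp [RX, eval_prod]

lemma natDegree_C_mul_RX_le (a : F) (c : ι → F) (S : Finset ι) :
    (C a * RX c S).natDegree ≤ #S :=
  (natDegree_C_mul_le _ _).trans (natDegree_finsetProd_X_sub_C_eq_card _ _).le

lemma natDegree_prod_C_sub_X_le (a : ι → F) (S : Finset ι) :
    (∏ i ∈ S, (C (a i) - X)).natDegree ≤ #S :=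
  (natDegree_prod_le _ _).trans <| (sum_le_sum fun i _ => (natDegree_sub_le _ _).trans
    (by simp)).trans_eq (card_eq_sum_ones S).symm

lemma prod_sub_comm (c : ι → F) (T : Finset ι) (x : F) :
    ∏ i ∈ T, (x - c i) = (-1) ^ #T * ∏ i ∈ T, (c i - x) := by
  simp only [← prod_neg, neg_sub]

lemma prod_sub_apply_ne_zero {c : ι → F} (hc : Function.Injective c) {T : Finset ι} {z : ι}
    (hz : z ∉ T) : ∏ i ∈ T, (c i - c z) ≠ 0 :=
  prod_ne_zero_iff.2 fun _ hi => sub_ne_zero.2 (hc.ne (ne_of_mem_of_not_mem hi hz))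

lemma prod_apply_sub_ne_zero {c : ι → F} (hc : Function.Injective c) {T : Finset ι} {z : ι}
    (hz : z ∉ T) : ∏ i ∈ T, (c z - c i) ≠ 0 :=
  prod_ne_zero_iff.2 fun _ hi => sub_ne_zero.2 (hc.ne (ne_of_mem_of_not_mem hi hz).symm)

lemma eq_zero_of_natDegree_lt_card_of_eval_apply_eq_zero {p : F[X]} {c : ι → F}
    (hc : Function.Injective c) {U : Finset ι} (h : ∀ x ∈ U, p.eval (c x) = 0)
    (hdeg : p.natDegree < #U) : p = 0 :=
  eq_zero_of_natDegree_lt_card_of_eval_eq_zero p (f := fun x : U => c x)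
    (hc.comp Subtype.val_injective) (fun x => h x x.2) (by rwa [Fintype.card_coe])

variable [DecidableEq ι]

def sylvWeight (P Q : F[X]) (c : ι → F) (U T : Finset ι) : F :=
  (∏ i ∈ T, P.eval (c i)) * (∏ i ∈ U \ T, Q.eval (c i)) / Rp c c T (U \ T)

def sylvSingleSum (P Q : F[X]) (c : ι → F) (U : Finset ι) (r : ℕ) : F :=
  ∑ T ∈ U.powersetCard r, sylvWeight P Q c U T

def sylvPoly (P Q : F[X]) (c : ι → F) (U : Finset ι) (r : ℕ) : F[X] :=
  ∑ T ∈ U.powersetCard r, C (sylvWeight P Q c U T) * RX c T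

def sylvPolyCompl (P Q : F[X]) (c : ι → F) (U : Finset ι) (r : ℕ) : F[X] :=
  ∑ T ∈ U.powersetCard r, C (sylvWeight P Q c U T) * RX c (U \ T)

lemma Rp_insert_right {κ : Type*} (a : κ → F) (b : ι → F) (S : Finset κ) {T : Finset ι} {j : ι}
    (hj : j ∉ T) : Rp a b S (insert j T) = (∏ i ∈ S, (a i - b j)) * Rp a b S T := by
  simp only [Rp, prod_insert hj, prod_mul_distrib]

lemma sum_powersetCard_succ_insert {M : Type*} [AddCommMonoid M] {s : Finset ι} {x : ι}
    (hx : x ∉ s) (r : ℕ) (f : Finset ι → M) :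
    ∑ T ∈ (insert x s).powersetCard (r + 1), f T =
      ∑ T ∈ s.powersetCard (r + 1), f T + ∑ T ∈ s.powersetCard r, f (insert x T) := by
  have hx' : ∀ T ∈ s.powersetCard r, x ∉ T := fun T hT h => hx ((mem_powersetCard.1 hT).1 h)
  rw [powersetCard_succ_insert hx, sum_union, sum_image]
  · exact fun T hT T' hT' => insert_erase_invOn.2.injOn (hx' T hT) (hx' T' hT')
  · refine disjoint_left.2 fun T hT hT' => ?_
    obtain ⟨T', -, rfl⟩ := mem_image.1 hT'
    exact hx ((mem_powersetCard.1 hT).1 (mem_insert_self x T'))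

variable {P Q : F[X]} {c : ι → F} {W T : Finset ι} {z : ι}

lemma sylvWeight_insert (hz : z ∉ W) (hT : T ⊆ W) :
    sylvWeight P Q c (insert z W) T =
      sylvWeight P Q c W T * Q.eval (c z) / ∏ i ∈ T, (c i - c z) := by
  have hzWT : z ∉ W \ T := fun h => hz (mem_sdiff.1 h).1
  rw [sylvWeight, sylvWeight, insert_sdiff_of_notMem _ (fun h => hz (hT h)), prod_insert hzWT,
    Rp_insert_right _ _ _ hzWT]
  ring

lemma sylvWeight_insert_insert (hz : z ∉ W) (hT : T ⊆ W) :
    sylvWeight P Q c (insert z W) (insert z T) =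
      P.eval (c z) * sylvWeight P Q c W T / ∏ j ∈ W \ T, (c z - c j) := by
  have hzT : z ∉ T := fun h => hz (hT h)
  rw [sylvWeight, sylvWeight, insert_sdiff_insert, sdiff_insert_of_notMem hz, prod_insert hzT, Rp,
    prod_insert hzT, ← Rp]
  ring

lemma eval_sylvPoly_insert (hc : Function.Injective c) (hz : z ∉ W) (r : ℕ) :
    (sylvPoly P Q c (insert z W) r).eval (c z) =
      (-1) ^ r * Q.eval (c z) * sylvSingleSum P Q c W r := by
  rw [sylvPoly, eval_finsetSum, sylvSingleSum, mul_sum]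
  symm
  refine sum_subset_zero_on_sdiff (powersetCard_mono (subset_insert z W)) (fun T hT => ?_)
    (fun T hT => ?_)
  · simp only [mem_sdiff, mem_powersetCard] at hT
    have hzT : z ∈ T := by
      by_contra hzT
      exact hT.2 ⟨(subset_insert_iff_of_notMem hzT).1 hT.1.1, hT.1.2⟩
    rw [eval_mul, eval_RX, prod_eq_zero hzT (sub_self _), mul_zero]
  · obtain ⟨hTW, hTr⟩ := mem_powersetCard.1 hT
    have hne := prod_sub_apply_ne_zero hc (fun h => hz (hTW h))
    rw [eval_mul, eval_C, eval_RX, sylvWeight_insert hz hTW, prod_sub_comm, hTr]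
    field_simp

lemma eval_sylvPolyCompl_insert (hc : Function.Injective c) (hz : z ∉ W) (r : ℕ) :
    (sylvPolyCompl P Q c (insert z W) (r + 1)).eval (c z) =
      P.eval (c z) * sylvSingleSum P Q c W r := by
  rw [sylvPolyCompl, eval_finsetSum, sum_powersetCard_succ_insert hz, sylvSingleSum, mul_sum]
  have hzT : ∀ T ∈ W.powersetCard (r + 1), z ∈ insert z W \ T := fun T hT =>
    mem_sdiff.2 ⟨mem_insert_self z W, fun h => hz ((mem_powersetCard.1 hT).1 h)⟩
  rw [sum_eq_zero fun T hT => by rw [eval_mul, eval_RX, prod_eq_zero (hzT T hT) (sub_self _),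
    mul_zero], zero_add]
  refine sum_congr rfl fun T hT => ?_
  have hTW := (mem_powersetCard.1 hT).1
  have hne := prod_apply_sub_ne_zero hc (T := W \ T) fun h => hz (mem_sdiff.1 h).1
  rw [eval_mul, eval_C, eval_RX, insert_sdiff_insert, sdiff_insert_of_notMem hz,
    sylvWeight_insert_insert hz hTW]
  field_simp

lemma mul_sylvSingleSum_insert (hc : Function.Injective c) (hz : z ∉ W) (r : ℕ) :
    (∏ j ∈ W, (c z - c j)) * sylvSingleSum P Q c (insert z W) (r + 1) =
      ((-1) ^ (r + 1) * Q * sylvPolyCompl P Q c W (r + 1) + P * sylvPoly P Q c W r).eval (c z) := by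
  have hsplit : ∀ T ⊆ W, (∏ j ∈ W, (c z - c j)) =
      (∏ j ∈ W \ T, (c z - c j)) * (-1) ^ #T * ∏ i ∈ T, (c i - c z) := fun T hT => by
    rw [← prod_sdiff hT, prod_sub_comm c T (c z), mul_assoc]
  rw [sylvSingleSum, sum_powersetCard_succ_insert hz, mul_add, mul_sum, mul_sum, eval_add,
    eval_mul, eval_mul, eval_mul, sylvPolyCompl, sylvPoly, eval_finsetSum, eval_finsetSum,
    mul_sum, mul_sum]
  congr 1 <;> refine sum_congr rfl fun T hT => ?_ <;> obtain ⟨hTW, hTr⟩ := mem_powersetCard.1 hT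
  · have hne := prod_sub_apply_ne_zero hc (fun h => hz (hTW h))
    rw [sylvWeight_insert hz hTW, hsplit T hTW, eval_mul, eval_C, eval_RX, hTr]
    simp only [eval_pow, eval_neg, eval_one]
    field_simp
  · have hne := prod_apply_sub_ne_zero hc (T := W \ T) fun h => hz (mem_sdiff.1 h).1
    rw [sylvWeight_insert_insert hz hTW, ← prod_sdiff hTW, eval_mul, eval_C, eval_RX]
    field_simp

lemma natDegree_sylvPoly_le (P Q : F[X]) (c : ι → F) (U : Finset ι) (r : ℕ) :
    (sylvPoly P Q c U r).natDegree ≤ r :=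
  natDegree_sum_le_of_forall_le _ _ fun T hT =>
    (natDegree_C_mul_RX_le _ c T).trans (mem_powersetCard.1 hT).2.le

lemma natDegree_sylvPolyCompl_le (P Q : F[X]) (c : ι → F) (U : Finset ι) (r : ℕ) :
    (sylvPolyCompl P Q c U r).natDegree ≤ #U - r :=
  natDegree_sum_le_of_forall_le _ _ fun T hT => (natDegree_C_mul_RX_le _ c _).trans <| by
    rw [card_sdiff_of_subset (mem_powersetCard.1 hT).1, (mem_powersetCard.1 hT).2]

lemma sylvPolyCompl_add_sylvPoly_eq_zero (hc : Function.Injective c) {r : ℕ}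
    (hP : P.natDegree + r < #W) (hQ : Q.natDegree ≤ r) :
    (-1) ^ (r + 1) * Q * sylvPolyCompl P Q c W (r + 1) + P * sylvPoly P Q c W r = 0 := by
  refine eq_zero_of_natDegree_lt_card_of_eval_apply_eq_zero hc (U := W) (fun x hx => ?_) ?_
  · rw [← insert_erase hx, eval_add, eval_mul, eval_mul, eval_mul,
      eval_sylvPolyCompl_insert hc (notMem_erase x W), eval_sylvPoly_insert hc (notMem_erase x W)]
    simp only [eval_pow, eval_neg, eval_one]
    ring
  · have hsign : ((-1 : F[X]) ^ (r + 1)).natDegree = 0 := by simp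
    have hcompl := natDegree_sylvPolyCompl_le P Q c W (r + 1)
    have hpoly := natDegree_sylvPoly_le P Q c W r
    refine (natDegree_add_le_of_degree_le (n := #W - 1)
      (natDegree_mul_le_of_le (natDegree_mul_le_of_le hsign.le hQ) hcompl |>.trans ?_)
      (natDegree_mul_le_of_le le_rfl hpoly |>.trans ?_)).trans_lt ?_ <;> omega

theorem sylvSingleSum_eq_zero (hc : Function.Injective c) {U : Finset ι} {q : ℕ}
    (hP : P.natDegree + q < #U) (hQ : Q.natDegree < q) : sylvSingleSum P Q c U q = 0 := by
  obtain ⟨r, rfl⟩ : ∃ r, q = r + 1 := ⟨q - 1, by omega⟩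
  obtain ⟨z, hz⟩ : U.Nonempty := card_pos.1 (by omega)
  have hzW := notMem_erase z U
  have hW : P.natDegree + r < #(U.erase z) := by rw [card_erase_of_mem hz]; omega
  have key := mul_sylvSingleSum_insert (P := P) (Q := Q) hc hzW r
  rw [sylvPolyCompl_add_sylvPoly_eq_zero hc hW (by omega), eval_zero, insert_erase hz] at key
  exact (mul_eq_zero.1 key).resolve_left (prod_apply_sub_ne_zero hc hzW)

theorem sylvPoly_eq_zero (hc : Function.Injective c) {U : Finset ι} {r : ℕ}
    (hP : P.natDegree + r + 1 < #U) (hQ : Q.natDegree < r) : sylvPoly P Q c U r = 0 := by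
  refine eq_zero_of_natDegree_lt_card_of_eval_apply_eq_zero hc (U := U) (fun x hx => ?_) ?_
  · rw [← insert_erase hx, eval_sylvPoly_insert hc (notMem_erase x U),
      sylvSingleSum_eq_zero hc (by rw [card_erase_of_mem hx]; omega) hQ, mul_zero]
  · exact (natDegree_sylvPoly_le P Q c U r).trans_lt (by omega)

end SingleSum

lemma sylv_eq_sum_sylvPoly {F : Type*} [Field F] {m n : ℕ} (A : Fin m → F) (B : Fin n → F)
    (p q : ℕ) :
    sylv A B p q = ∑ S ∈ (univ : Finset (Fin m)).powersetCard p,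
      C (Rp A A S Sᶜ)⁻¹ * RX A S *
        sylvPoly (∏ i ∈ S, (C (A i) - X)) (∏ i ∈ Sᶜ, (C (A i) - X)) B univ q := by
  refine sum_congr rfl fun S _ => ?_
  rw [sylvPoly, mul_sum]
  refine sum_congr rfl fun T _ => ?_
  have hweight : sylvWeight (∏ i ∈ S, (C (A i) - X)) (∏ i ∈ Sᶜ, (C (A i) - X)) B univ T =
      Rp A B S T * Rp A B Sᶜ Tᶜ / Rp B B T Tᶜ := by
    simp only [sylvWeight, ← compl_eq_univ_sdiff, eval_prod, eval_sub, eval_C, eval_X, Rp]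
    rw [prod_comm (s := T), prod_comm (s := Tᶜ)]
  rw [hweight, show ∀ x a b : F, x / (a * b) = a⁻¹ * (x / b) from fun _ _ _ => by ring, C_mul]
  ring

theorem sylvester_double_sum_eq_zero_general {F : Type*} [Field F] {m n : ℕ}
    (A : Fin m → F) (B : Fin n → F)
    (hB : Function.Injective B)
    (p q : ℕ)
    (h1 : m + 1 ≤ p + q) (h2 : p + q ≤ n - 2) :
    sylv A B p q = 0 := by
  rw [sylv_eq_sum_sylvPoly]
  refine sum_eq_zero fun S hS => ?_
  have hSp : #S = p := (mem_powersetCard.1 hS).2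
  have hSm : #S ≤ m := (card_le_univ S).trans_eq (Fintype.card_fin m)
  have hP := natDegree_prod_C_sub_X_le A S
  have hQ := natDegree_prod_C_sub_X_le A Sᶜ
  rw [card_compl, Fintype.card_fin] at hQ
  rw [sylvPoly_eq_zero hB (by rw [card_univ, Fintype.card_fin]; omega) (hQ.trans_lt (by omega)),
    mul_zero]

/-- for `1 ≤ m ≤ n − 3` and `m + 1 ≤ p + q ≤ n − 2`, `Sylv^{p,q}(A,B) = 0`. -/
theorem sylvester_double_sum_eq_zero {F : Type*} [Field F] {m n : ℕ}
    (hm : 1 ≤ m) (hmn : m ≤ n - 3)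
    (A : Fin m → F) (B : Fin n → F)
    (hA : Function.Injective A) (hB : Function.Injective B)
    (p q : ℕ) (hp : p ≤ m) (hq : q ≤ n)
    (h1 : m + 1 ≤ p + q) (h2 : p + q ≤ n - 2) :
    sylv A B p q = 0 :=
  sylvester_double_sum_eq_zero_general A B hB p q h1 h2
end

section
/- Let 1 ≤ k ≤ min(m,n)−1 and let α be an entry of A (a root of f). Then G_k(f,g) evaluated at α equals (−1)^{m−k−1} · coeff_{m−k−1}( G_{k−1}(f/(x−α), g) ), where f/(x−α) is the exact quotient (monic of degree m−1), G_{k−1}(f/(x−α), g) is formed with respect to degrees m−1 and n, and coeff_{m−k−1} denotes the coefficient of x^{m−k−1}. -/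
open Polynomial Finset

/-!
Write `f = (X - α) f₁` with `α` the chosen root. Both sides are determinants of matrices whose
rows are shifted coefficient sequences of the polynomials involved. In `G_k(f,g)(α)`, subtracting
`α` times the next `g`-row from every `g`-row but the last turns the last column (the powers of
`α`) into a unit vector; after expanding along it, every remaining row is a coefficient row of
`X - α` times `f₁` or `g`, and the column operations of synthetic division by `X - α` remove
that factor. On the right, only the first `g`-row carries `x^{m-k-1}`, and the resulting minor,
whose first column is `(1, 0, …, 0)` because `f₁` is monic, reduces to the same determinant.
-/

namespace Matrix

variable {R : Type*} [CommRing R]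

theorem det_eq_of_forall_row_eq_smul_add_succ {n : ℕ}
    {A B : Matrix (Fin (n + 1)) (Fin (n + 1)) R} (c : Fin n → R)
    (A_last : ∀ j, A (Fin.last n) j = B (Fin.last n) j)
    (A_castSucc : ∀ (i : Fin n) (j), A i.castSucc j = B i.castSucc j + c i * A i.succ j) :
    det A = det B := by
  rw [← det_submatrix_equiv_self Fin.revPerm A, ← det_submatrix_equiv_self Fin.revPerm B]
  refine det_eq_of_forall_row_eq_smul_add_pred (fun i => c i.rev) (fun j => ?_) (fun i j => ?_)
  · simpa using A_last _
  · simpa [Fin.rev_succ, Fin.rev_castSucc] using A_castSucc i.rev (Fin.rev j)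

theorem det_eq_det_submatrix_castSucc_of_col_last {n : ℕ}
    (A : Matrix (Fin (n + 1)) (Fin (n + 1)) R)
    (h : ∀ i, A i (Fin.last n) = if i = Fin.last n then 1 else 0) :
    det A = det (A.submatrix Fin.castSucc Fin.castSucc) := by
  rw [det_succ_column A (Fin.last n), Finset.sum_eq_single (Fin.last n)]
  · simp [h]
  · intro i _ hi
    simp [h, hi]
  · simp

theorem det_toeplitzRows_sub_smul {n : ℕ} (α : R) (d : Fin n → ℤ → R)
    (hd : ∀ i, d i (i + 1) = 0) :
    det (of fun i j : Fin n => d i (i - j) - α * d i (i - j + 1))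
      = det (of fun i j : Fin n => d i (i - j)) := by
  cases n with
  | zero => simp
  | succ n =>
    -- the column operations of synthetic division by `X - α`
    refine (det_eq_of_forall_col_eq_smul_add_pred (fun _ => α) (fun i => ?_) (fun i j => ?_)).symm
    · simp [hd]
    · have : ((i : ℕ) : ℤ) - ((j.succ : ℕ) : ℤ) + 1 = (i : ℕ) - (j.castSucc : ℕ) := by
        simp; ring
      simp only [of_apply, this]
      ring

end Matrix

section StackedToeplitz

variable {R : Type*}

def stackedToeplitz (N p s : ℕ) (a b : ℤ → R) : Matrix (Fin N) (Fin N) R :=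
  Matrix.of fun i j => if (i : ℕ) < p then a (i - j) else b (i - j - s)

theorem submatrix_succAbove_stackedToeplitz (p e s : ℕ) (a b : ℤ → R) :
    (stackedToeplitz (p + e + 1) p (s + 1) a b).submatrix
        (Fin.succAbove ⟨p, by omega⟩) Fin.castSucc
      = stackedToeplitz (p + e) p s a b := by
  ext r j
  by_cases hr : (r : ℕ) < p
  · rw [Matrix.submatrix_apply, Fin.succAbove_of_castSucc_lt _ _ (by simpa [Fin.lt_def] using hr)]
    simp [stackedToeplitz, hr]
  · rw [Matrix.submatrix_apply, Fin.succAbove_of_le_castSucc _ _ (by simp [Fin.le_def]; omega)]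
    simp only [stackedToeplitz, Matrix.of_apply, Fin.val_succ, Fin.val_castSucc, hr]
    rw [if_neg (by omega)]
    push_cast
    ring_nf

variable [CommRing R]

def stackedToeplitzG (N p s : ℕ) (a b : ℤ → R) (x : R) : Matrix (Fin N) (Fin N) R :=
  Matrix.of fun i j =>
    if (j : ℕ) = N - 1 then (if (i : ℕ) < p then 0 else x ^ (N - 1 - i))
    else stackedToeplitz N p s a b i j

theorem RingHom.mapMatrix_stackedToeplitzG {S : Type*} [CommRing S] (φ : R →+* S)
    (N p s : ℕ) (a b : ℤ → R) (x : R) :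
    φ.mapMatrix (stackedToeplitzG N p s a b x)
      = stackedToeplitzG N p s (fun v => φ (a v)) (fun v => φ (b v)) (φ x) := by
  ext i j
  simp only [RingHom.mapMatrix_apply, Matrix.map_apply, stackedToeplitzG, stackedToeplitz,
    Matrix.of_apply]
  split_ifs <;> simp

theorem det_stackedToeplitz_succ {N p s : ℕ} (hs : s ≤ p) {a b : ℤ → R}
    (ha : ∀ v > 0, a v = 0) (hb : ∀ v > 0, b v = 0) :
    (stackedToeplitz (N + 1) (p + 1) s a b).det = a 0 * (stackedToeplitz N p s a b).det := by
  rw [Matrix.det_succ_column_zero, Finset.sum_eq_single 0]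
  · congr 1
    · simp [stackedToeplitz]
    · congr 1
      ext i j
      simp only [stackedToeplitz, Matrix.submatrix_apply, Matrix.of_apply, Fin.succAbove_zero,
        Fin.val_succ, Nat.cast_succ, add_lt_add_iff_right]
      split_ifs <;> ring_nf
  · intro i _ hi
    have hi : 0 < (i : ℕ) := Nat.pos_of_ne_zero (Fin.val_ne_zero_iff.mpr hi)
    simp only [stackedToeplitz, Matrix.of_apply, Fin.val_zero, Nat.cast_zero, sub_zero]
    split_ifs
    · rw [ha _ (by omega), mul_zero, zero_mul]
    · rw [hb _ (by omega), mul_zero, zero_mul]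
  · simp

theorem coeff_det_stackedToeplitzG_X (p e s : ℕ) (a b : ℤ → R) :
    (stackedToeplitzG (p + e + 1) p (s + 1) (fun v => C (a v)) (fun v => C (b v)) X).det.coeff e
      = (-1) ^ e * (stackedToeplitz (p + e) p s a b).det := by
  set G := stackedToeplitzG (p + e + 1) p (s + 1) (fun v => C (a v)) (fun v => C (b v)) X
  have hG : ∀ i, G i (Fin.last _) = if (i : ℕ) < p then 0 else X ^ (p + e - i) := by
    intro i; simp [G, stackedToeplitzG]
  have hminor : ∀ i : Fin (p + e + 1), (G.submatrix i.succAbove (Fin.last _).succAbove).det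
      = C ((stackedToeplitz (p + e + 1) p (s + 1) a b).submatrix i.succAbove Fin.castSucc).det := by
    intro i
    rw [RingHom.map_det]
    congr 1
    ext r j
    have := j.isLt
    simp [G, stackedToeplitzG, stackedToeplitz, apply_ite C, Fin.succAbove_last, this.ne]
  have hterm : ∀ k j (d : R), ((-1 : R[X]) ^ k * X ^ j * C d).coeff e
      = if e = j then (-1) ^ k * d else 0 := by
    intro k j d
    rw [show (-1 : R[X]) ^ k * X ^ j * C d = C ((-1) ^ k * d) * X ^ j by simp,
      coeff_C_mul_X_pow]
  rw [Matrix.det_succ_column G (Fin.last _), finsetSum_coeff,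
    Finset.sum_eq_single ⟨p, by omega⟩]
  · rw [hminor, hG, submatrix_succAbove_stackedToeplitz, if_neg (lt_irrefl p), hterm]
    simp only [Fin.val_last, Nat.add_sub_cancel_left, if_true]
    rw [show p + (p + e) = 2 * p + e by ring, pow_add, pow_mul]
    simp
  · intro i _ hi
    have hi : (i : ℕ) ≠ p := fun h => hi (Fin.ext h)
    rw [hG]
    split_ifs with hip
    · simp
    · rw [hminor, hterm, if_neg (by omega)]
  · simp

theorem det_stackedToeplitzG_sub_mul_succ {N p s : ℕ} (hs : s ≤ p) (hp : p ≤ N) (α : R)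
    {c b : ℤ → R} (hc : ∀ v > 0, c v = 0) (hb : ∀ v > 0, b v = 0) :
    (stackedToeplitzG (N + 1) p s (fun v => c v - α * c (v + 1)) b α).det
      = (stackedToeplitz N p s c b).det := by
  set G := stackedToeplitzG (N + 1) p s (fun v => c v - α * c (v + 1)) b α
  set d : ℕ → ℤ → R := fun i v => if i < p then c v else b (v - s)
  calc G.det
      = (Matrix.of fun i j : Fin (N + 1) => if (i : ℕ) = N then G i j
          else if (j : ℕ) = N then 0 else d i (i - j) - α * d i (i - j + 1)).det := by
        refine Matrix.det_eq_of_forall_row_eq_smul_add_succ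
          (fun i => if p ≤ (i : ℕ) then α else 0) (fun j => by simp) (fun i j => ?_)
        have := i.isLt
        simp only [G, d, stackedToeplitzG, stackedToeplitz, Matrix.of_apply, Fin.val_castSucc,
          Fin.val_succ, add_tsub_cancel_right]
        split_ifs
        all_goals first
          | omega
          | rw [show N - (i : ℕ) = N - ((i : ℕ) + 1) + 1 by omega, pow_succ', zero_add]
          | (push_cast; ring_nf)
    _ = (Matrix.of fun i j : Fin N => d i (i - j) - α * d i (i - j + 1)).det := by
        rw [Matrix.det_eq_det_submatrix_castSucc_of_col_last]
        · congr 1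
          ext i j
          simp [i.isLt.ne, j.isLt.ne]
        · intro i
          by_cases hi : (i : ℕ) = N
          · simp [hi, G, stackedToeplitzG, Fin.ext_iff, hp.not_gt]
          · simp [hi, Fin.ext_iff]
    _ = (Matrix.of fun i j : Fin N => d i (i - j)).det :=
        Matrix.det_toeplitzRows_sub_smul α (fun i => d i) fun i => by
          simp only [d]
          split_ifs
          · exact hc _ (by omega)
          · exact hb _ (by omega)
    _ = (stackedToeplitz N p s c b).det := rfl

end StackedToeplitz

section Subresultant

variable {F : Type*} [Field F]

theorem Gk_eq_det_stackedToeplitzG {m n k : ℕ} (hk : k ≤ n) (f g : F[X]) :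
    Gk m n k f g = (stackedToeplitzG (m + n - 2 * k) (n - k) (n - k)
      (fun v => C (coeffZ f (m + v))) (fun v => C (coeffZ g (n + v))) X).det := by
  unfold Gk
  congr 1
  ext i j
  have := i.isLt
  simp only [sresMG, sresM, stackedToeplitzG, stackedToeplitz, Matrix.of_apply]
  split_ifs
  all_goals first
    | rfl
    | rw [show m - k - 1 - ((i : ℕ) - (n - k)) = m + n - 2 * k - 1 - i by omega]
    | (push_cast [hk]; ring_nf)

theorem coeffZ_add_of_natDegree_le {f : F[X]} {d : ℕ} (hf : f.natDegree ≤ d) {v : ℤ}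
    (hv : 0 < v) :
    coeffZ f (d + v) = 0 := by
  rw [coeffZ, if_pos (by omega)]
  exact coeff_eq_zero_of_natDegree_lt (by omega)

theorem coeffZ_natCast (f : F[X]) (d : ℕ) : coeffZ f d = f.coeff d := by
  simp [coeffZ]

theorem coeffZ_X_sub_C_mul (α : F) (f : F[X]) (z : ℤ) :
    coeffZ ((X - C α) * f) z = coeffZ f (z - 1) - α * coeffZ f z := by
  rcases lt_trichotomy z 0 with hz | rfl | hz
  · simp [coeffZ, hz.not_ge, show ¬ 1 ≤ z by omega]
  · simp [coeffZ, mul_coeff_zero]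
  · obtain ⟨t, rfl⟩ : ∃ t : ℕ, z = t + 1 := ⟨(z - 1).toNat, by omega⟩
    simp only [coeffZ, if_pos (by omega : (0 : ℤ) ≤ t + 1), add_sub_cancel_right,
      Nat.cast_nonneg, if_true, Int.toNat_natCast]
    rw [show ((t : ℤ) + 1).toNat = t + 1 by omega, sub_mul, coeff_sub, coeff_X_mul, coeff_C_mul]

end Subresultant

theorem Gk_eval_root_f_general {F : Type*} [Field F] {m n : ℕ}
    (A : Fin m → F) (B : Fin n → F)
    (f g : Polynomial F) (hf : f = RX A Finset.univ) (hg : g = RX B Finset.univ)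
    (k : ℕ) (hk1 : 1 ≤ k) (hk2 : k ≤ min m n - 1) (i0 : Fin m) :
    (Gk m n k f g).eval (A i0)
      = (-1 : F) ^ (m - k - 1)
          * (Gk (m - 1) n (k - 1) (RX A (Finset.univ.erase i0)) g).coeff (m - k - 1) := by
  set f₁ := RX A (univ.erase i0)
  set c : ℤ → F := fun v => coeffZ f₁ ((m - 1 : ℕ) + v)
  set b : ℤ → F := fun v => coeffZ g (n + v)
  have hf₁ : f₁.natDegree = m - 1 := by simp [f₁, RX]
  have hc : ∀ v > 0, c v = 0 := fun v hv => coeffZ_add_of_natDegree_le hf₁.le hv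
  have hb : ∀ v > 0, b v = 0 := fun v hv => coeffZ_add_of_natDegree_le (by simp [hg, RX]) hv
  have hc₀ : c 0 = 1 := by
    have hmonic : f₁.Monic := monic_prod_X_sub_C A (univ.erase i0)
    simpa [c, coeffZ_natCast, ← hf₁] using hmonic.leadingCoeff
  have hfc : (fun v => coeffZ f (m + v)) = fun v => c v - A i0 * c (v + 1) := by
    have hsplit : f = (X - C (A i0)) * f₁ := by
      rw [hf, RX, ← mul_prod_erase _ _ (mem_univ i0)]
      rfl
    funext v
    rw [hsplit, coeffZ_X_sub_C_mul]
    simp only [c]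
    congr 3 <;> push_cast [show 1 ≤ m by omega] <;> ring
  set p := n - k
  set e := m - k - 1
  rw [Gk_eq_det_stackedToeplitzG (by omega), Gk_eq_det_stackedToeplitzG (by omega),
    ← coe_evalRingHom, RingHom.map_det, RingHom.mapMatrix_stackedToeplitzG]
  simp only [coe_evalRingHom, eval_C, eval_X]
  rw [hfc, show m + n - 2 * k = p + e + 1 by omega, show n - (k - 1) = p + 1 by omega,
    show m - 1 + n - 2 * (k - 1) = p + 1 + e + 1 by omega, coeff_det_stackedToeplitzG_X,
    show p + 1 + e = p + e + 1 by ring, det_stackedToeplitz_succ le_rfl hc hb,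
    det_stackedToeplitzG_sub_mul_succ le_rfl (by omega) _ hc hb, hc₀, ← mul_assoc, ← pow_add,
    Even.neg_one_pow ⟨e, rfl⟩, one_mul, one_mul]

/-- for `1 ≤ k ≤ min(m,n) − 1` and `α = A i0` a root of `f`,
`G_k(f,g)(α) = (−1)^{m−k−1} coeff_{m−k−1}(G_{k−1}(f/(x−α), g))`, where `f/(x−α)` is the
exact quotient `∏_{i ≠ i0} (x − α_i)` and `G_{k−1}` is formed w.r.t. degrees `m−1` and `n`. -/
theorem Gk_eval_root_f {F : Type*} [Field F] {m n : ℕ} (hm : 1 ≤ m) (hn : 1 ≤ n)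
    (A : Fin m → F) (B : Fin n → F)
    (hA : Function.Injective A) (hB : Function.Injective B)
    (f g : Polynomial F) (hf : f = RX A Finset.univ) (hg : g = RX B Finset.univ)
    (k : ℕ) (hk1 : 1 ≤ k) (hk2 : k ≤ min m n - 1) (i0 : Fin m) :
    (Gk m n k f g).eval (A i0)
      = (-1 : F) ^ (m - k - 1)
          * (Gk (m - 1) n (k - 1) (RX A (Finset.univ.erase i0)) g).coeff (m - k - 1) :=
  Gk_eval_root_f_general A B f g hf hg k hk1 hk2 i0
end

section
/- Let 0 ≤ k < min(m,n) and let β be an entry of B (a root of g). Then Sres_k(f,g) evaluated at β equals (−1)^{m−k} · coeff_k( Sres_k(f, g/(x−β)) ) · f(β), where g/(x−β) is the exact quotient (monic of degree n−1), Sres_k(f, g/(x−β)) is the k-th subresultant formed with respect to degrees m and n−1, and coeff_k denotes the coefficient of x^k. -/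
open Polynomial Finset

/-!
Evaluating at a root `β` of `g` kills the `g`-part of the last column of `M_k(f,g)`, so
`Sres_k(f,g)(β) = f(β) F_k(f,g)(β)` by `Sres_k = f F_k + g G_k`. In the evaluated matrix of
`F_k`, subtracting `β` times each `f`-row from the row above leaves the unit vector `e_{n-k-1}`
as last column, and turns every other row into the coefficient vector of `(x - β) q` for a row
polynomial `q` of `M_k(f, g/(x-β))`. Expanding along the last column, and noting that
multiplication by `x - β` acts on coefficient vectors by a unitriangular matrix, leaves the
coefficient matrix of `M_k(f, g/(x-β))`, whose determinant is the coefficient of `x^k` of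
`Sres_k(f, g/(x-β))`.
-/

noncomputable section

section Matrix

variable {R : Type*} [CommRing R]

theorem coeff_det_updateCol_map_C {ι : Type*} [Fintype ι] [DecidableEq ι]
    (M : Matrix ι ι R) (j : ι) (u : ι → R[X]) (d : ℕ) :
    (((M.map C).updateCol j u).det).coeff d = (M.updateCol j fun i => (u i).coeff d).det := by
  rw [← Matrix.cramer_apply, ← Matrix.cramer_apply, Matrix.cramer_eq_adjugate_mulVec,
    Matrix.cramer_eq_adjugate_mulVec, ← RingHom.mapMatrix_apply (f := C), ← C.map_adjugate]
  simp [Matrix.mulVec, dotProduct, coeff_C_mul]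

theorem det_eq_of_col_last_eq_single {L : ℕ} (M : Matrix (Fin (L + 1)) (Fin (L + 1)) R)
    (r : Fin (L + 1)) (hM : ∀ i, M i (Fin.last L) = (Pi.single r 1 : Fin (L + 1) → R) i) :
    M.det = (-1) ^ ((r : ℕ) + L) * (M.submatrix r.succAbove Fin.castSucc).det := by
  rw [Matrix.det_succ_column M (Fin.last L), Finset.sum_eq_single r]
  · simp [hM, Fin.succAbove_last]
  · intro i _ hi
    simp [hM, hi]
  · simp

def superdiag (L r : ℕ) (c : R) : Matrix (Fin L) (Fin L) R :=
  fun i j => if (j : ℕ) = i + 1 ∧ (i : ℕ) < r then c else 0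

theorem det_one_sub_superdiag (L r : ℕ) (c : R) : (1 - superdiag L r c).det = 1 := by
  rw [Matrix.det_of_isUpperTriangular]
  · simp [superdiag]
  · intro i j (hij : j < i)
    have hij' := Fin.lt_def.mp hij
    simp only [Matrix.sub_apply, superdiag]
    rw [Matrix.one_apply_ne hij.ne', if_neg (by omega), sub_zero]

theorem one_sub_superdiag_mul_apply {L : ℕ} (r : ℕ) (c : R) {κ : Type*}
    (M : Matrix (Fin L) κ R) (i : Fin L) (j : κ) :
    ((1 - superdiag L r c) * M : Matrix (Fin L) κ R) i j
      = M i j - if h : (i : ℕ) < r ∧ (i : ℕ) + 1 < L then c * M ⟨i + 1, h.2⟩ j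
          else 0 := by
  rw [Matrix.sub_mul, Matrix.one_mul, Matrix.sub_apply, Matrix.mul_apply]
  congr 1
  split_ifs with h
  · rw [Finset.sum_eq_single ⟨i + 1, h.2⟩]
    · simp [superdiag, h.1]
    · intro q _ hq
      simp [superdiag, Fin.ext_iff] at hq ⊢
      omega
    · simp
  · refine Finset.sum_eq_zero fun q _ => ?_
    simp only [superdiag]
    rw [if_neg (by omega), zero_mul]

theorem mul_one_sub_superdiag_apply {L : ℕ} (c : R) {κ : Type*}
    (M : Matrix κ (Fin L) R) (i : κ) (j : Fin L) :
    (M * (1 - superdiag L L c) : Matrix κ (Fin L) R) i j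
      = M i j - if h : 0 < (j : ℕ) then M i ⟨j - 1, by omega⟩ * c else 0 := by
  rw [Matrix.mul_sub, Matrix.mul_one, Matrix.sub_apply, Matrix.mul_apply]
  congr 1
  split_ifs with h
  · rw [Finset.sum_eq_single ⟨j - 1, by omega⟩]
    · simp [superdiag]
      omega
    · intro q _ hq
      simp [superdiag, Fin.ext_iff] at hq ⊢
      omega
    · simp
  · refine Finset.sum_eq_zero fun q _ => ?_
    simp only [superdiag]
    rw [if_neg (by omega), mul_zero]

end Matrix

section Subresultant

variable {F : Type*} [Field F]

theorem natDegree_RX {ι : Type*} (a : ι → F) (S : Finset ι) : (RX a S).natDegree = S.card := by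
  rw [RX, natDegree_prod _ _ fun i _ => X_sub_C_ne_zero (a i)]
  simp

/-- The polynomial whose coefficients fill row `i` of `M_k(f,g)`. -/
def sresRow (m n k : ℕ) (f g : F[X]) (i : ℕ) : F[X] :=
  if i < n - k then X ^ (n - k - 1 - i) * f else X ^ (m - k - 1 - (i - (n - k))) * g

def sresCoeffMat (m n k : ℕ) (f g : F[X]) : Matrix (Fin (m + n - 2*k)) (Fin (m + n - 2*k)) F :=
  fun i j => (sresRow m n k f g i).coeff (m + n - k - 1 - j)

/-- The matrix `sresMF m n k f g` evaluated at `x = β`, re-indexed by `Fin (L + 1)`; it is meant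
for `L + 1 = m + n - 2k`. -/
def sresMFEval (m n k L : ℕ) (β : F) (f g : F[X]) : Matrix (Fin (L + 1)) (Fin (L + 1)) F :=
  fun i j => if (j : ℕ) = L then (if (i : ℕ) < n - k then β ^ (n - k - 1 - i) else 0)
    else (sresRow m n k f g i).coeff (m + n - k - 1 - j)

theorem coeffZ_eq_coeff_X_pow_mul (p : F[X]) {a e : ℕ} {z : ℤ} (hz : z = e - a) :
    coeffZ p z = (X ^ a * p).coeff e := by
  rw [coeffZ, coeff_X_pow_mul']
  split_ifs <;> first | rfl | omega | (congr 1; omega)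

theorem natDegree_sresRow_le {m n k : ℕ} {f g : F[X]} (hf : f.natDegree ≤ m)
    (hg : g.natDegree ≤ n) {i : ℕ} (hi : i < m + n - 2*k) :
    (sresRow m n k f g i).natDegree ≤ m + n - k - 1 := by
  unfold sresRow
  split_ifs
  · refine (natDegree_mul_le).trans ?_
    rw [natDegree_X_pow]
    omega
  · refine (natDegree_mul_le).trans ?_
    rw [natDegree_X_pow]
    omega

variable {m n k : ℕ} (f g : F[X])

theorem sresM_apply (hkn : k ≤ n) (i j : Fin (m + n - 2*k)) :
    sresM m n k f g i j = if (j : ℕ) = m + n - 2*k - 1 then sresRow m n k f g i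
      else C ((sresRow m n k f g i).coeff (m + n - k - 1 - j)) := by
  have := i.2
  have := j.2
  unfold sresM sresRow
  split_ifs <;> first | rfl | (congr 1; apply coeffZ_eq_coeff_X_pow_mul; omega)

theorem sresMF_map_eval_apply (hkn : k ≤ n) (β : F) (i j : Fin (m + n - 2*k)) :
    (sresMF m n k f g).map (evalRingHom β) i j = if (j : ℕ) = m + n - 2*k - 1 then
      (if (i : ℕ) < n - k then β ^ (n - k - 1 - i) else 0)
      else (sresRow m n k f g i).coeff (m + n - k - 1 - j) := by
  rw [Matrix.map_apply, sresMF]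
  split_ifs <;> simp_all [sresM_apply f g hkn]

theorem Sres_coeff_eq_det (hkn : k ≤ n) (hN : 2*k < m + n) :
    (Sres m n k f g).coeff k = (sresCoeffMat m n k f g).det := by
  set jL : Fin (m + n - 2*k) := ⟨m + n - 2*k - 1, by omega⟩
  have hM : sresM m n k f g
      = ((sresCoeffMat m n k f g).map C).updateCol jL (fun i => sresRow m n k f g i) := by
    ext i j
    rw [sresM_apply f g hkn]
    by_cases hj : j = jL
    · simp [hj, jL]
    · rw [Matrix.updateCol_ne hj, if_neg (fun h => hj (Fin.ext h))]
      rfl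
  rw [Sres, hM, coeff_det_updateCol_map_C]
  conv_rhs => rw [← Matrix.updateCol_eq_self (sresCoeffMat m n k f g) jL]
  congr 2
  ext i
  simp only [sresCoeffMat, jL]
  congr 1
  omega

theorem Sres_eq_mul_Fk_add_mul_Gk (hN : 2*k < m + n) :
    Sres m n k f g = f * Fk m n k f g + g * Gk m n k f g := by
  set jL : Fin (m + n - 2*k) := ⟨m + n - 2*k - 1, by omega⟩
  set u : Fin (m + n - 2*k) → F[X] :=
    fun i => if (i : ℕ) < n - k then X ^ (n - k - 1 - i) else 0
  set v : Fin (m + n - 2*k) → F[X] :=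
    fun i => if (i : ℕ) < n - k then 0 else X ^ (m - k - 1 - (i - (n - k)))
  have hF : sresMF m n k f g = (sresM m n k f g).updateCol jL u := by
    ext i j
    by_cases hj : j = jL
    · simp [sresMF, hj, jL, u]
    · simp [sresMF, Matrix.updateCol_ne hj, jL, Fin.ext_iff.not.mp hj]
  have hG : sresMG m n k f g = (sresM m n k f g).updateCol jL v := by
    ext i j
    by_cases hj : j = jL
    · simp [sresMG, hj, jL, v]
    · simp [sresMG, Matrix.updateCol_ne hj, jL, Fin.ext_iff.not.mp hj]
  have hcol : (fun i => sresM m n k f g i jL) = f • u + g • v := by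
    ext1 i
    by_cases hi : (i : ℕ) < n - k <;> simp [sresM, jL, u, v, hi, mul_comm]
  rw [Sres, Fk, Gk, hF, hG, ← Matrix.det_updateCol_smul, ← Matrix.det_updateCol_smul,
    ← Matrix.det_updateCol_add, ← hcol, Matrix.updateCol_eq_self]

end Subresultant

section RowReduction

variable {F : Type*} [Field F] {m n k : ℕ} (β : F) (f g' : F[X])

theorem sresRow_sub_C_mul_sresRow_succ {g : F[X]} {x : ℕ} (hx : x < n - k - 1) :
    sresRow m n k f g x - C β * sresRow m n k f g (x + 1)
      = (X - C β) * sresRow m (n - 1) k f g' x := by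
  simp only [sresRow, if_pos (show x < n - k by omega), if_pos (show x + 1 < n - k by omega),
    if_pos (show x < n - 1 - k by omega)]
  rw [show n - k - 1 - x = (n - 1 - k - 1 - x) + 1 by omega,
    show n - k - 1 - (x + 1) = n - 1 - k - 1 - x by omega, pow_succ]
  ring

theorem sresRow_succ_of_le (hkn : k < n) {x : ℕ} (hx : n - k - 1 ≤ x) :
    sresRow m n k f ((X - C β) * g') (x + 1) = (X - C β) * sresRow m (n - 1) k f g' x := by
  simp only [sresRow, if_neg (show ¬ x + 1 < n - k by omega),
    if_neg (show ¬ x < n - 1 - k by omega), show x + 1 - (n - k) = x - (n - 1 - k) by omega]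
  ring

variable {L : ℕ}

theorem one_sub_superdiag_mul_sresMFEval_apply_last
    (hkm : k < m) (hkn : k < n) (hL : m + n - 2*k = L + 1)
    (i : Fin (L + 1)) :
    ((1 - superdiag (L + 1) (n - k - 1) β) * sresMFEval m n k L β f ((X - C β) * g'))
        i (Fin.last L)
      = (Pi.single ⟨n - k - 1, by omega⟩ 1 : Fin (L + 1) → F) i := by
  have hi := i.2
  simp only [one_sub_superdiag_mul_apply, sresMFEval, Fin.val_last, if_true, Pi.single_apply,
    Fin.ext_iff]
  rcases lt_trichotomy (i : ℕ) (n - k - 1) with hlt | heq | hgt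
  · rw [dif_pos ⟨hlt, by omega⟩, if_pos (by omega), if_pos (by omega), if_neg hlt.ne,
      show n - k - 1 - i = (n - k - 1 - (i + 1)) + 1 by omega, pow_succ']
    ring
  · simp [heq, hkn]
  · rw [dif_neg (by omega), if_neg (by omega), if_neg hgt.ne']
    ring

theorem one_sub_superdiag_mul_sresMFEval_submatrix
    {C' : Matrix (Fin L) (Fin L) F}
    (hC' : ∀ x y, C' x y = (sresRow m (n - 1) k f g' x).coeff (m + n - k - 2 - y))
    (hkm : k < m) (hkn : k < n) (hL : m + n - 2*k = L + 1) (hf : f.natDegree ≤ m)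
    (hg' : g'.natDegree < n) :
    ((1 - superdiag (L + 1) (n - k - 1) β) * sresMFEval m n k L β f ((X - C β) * g')).submatrix
        (Fin.succAbove ⟨n - k - 1, by omega⟩) Fin.castSucc
      = C' * (1 - superdiag L L β) := by
  ext x y
  have hx := x.2
  have hy := y.2
  set Q := sresRow m (n - 1) k f g' x
  have hQ : Q.coeff (m + n - k - 1) = 0 :=
    coeff_eq_zero_of_natDegree_lt <| (natDegree_sresRow_le hf (by omega) (by omega)).trans_lt
      (by omega)
  have hrow : ((1 - superdiag (L + 1) (n - k - 1) β) * sresMFEval m n k L β f ((X - C β) * g'))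
      (Fin.succAbove ⟨n - k - 1, by omega⟩ x) y.castSucc
        = ((X - C β) * Q).coeff (m + n - k - 1 - y) := by
    rcases lt_or_ge (x : ℕ) (n - k - 1) with hxr | hxr
    · rw [Fin.succAbove_of_castSucc_lt _ _ (Fin.lt_def.mpr (by simpa using hxr)),
        one_sub_superdiag_mul_apply,
        dif_pos (by simp only [Fin.val_castSucc]; omega)]
      simp only [sresMFEval, Fin.val_castSucc, if_neg (show (y : ℕ) ≠ L by omega)]
      rw [← sresRow_sub_C_mul_sresRow_succ β f g' hxr, coeff_sub, coeff_C_mul]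
    · rw [Fin.succAbove_of_le_castSucc _ _ (Fin.le_def.mpr (by simpa using hxr)),
        one_sub_superdiag_mul_apply,
        dif_neg (by simp; omega)]
      simp only [sresMFEval, Fin.val_succ, Fin.val_castSucc, if_neg (show (y : ℕ) ≠ L by omega),
        sub_zero]
      rw [sresRow_succ_of_le β f g' hkn hxr]
  rw [Matrix.submatrix_apply, hrow, mul_one_sub_superdiag_apply, hC']
  split_ifs with hy0
  · rw [hC', show m + n - k - 1 - y = (m + n - k - 2 - y) + 1 by omega, coeff_X_sub_C_mul,
      show m + n - k - 2 - (y - 1 : ℕ) = (m + n - k - 2 - y) + 1 by omega]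
    ring
  · rw [show m + n - k - 1 - y = (m + n - k - 2 - y) + 1 by omega, coeff_X_sub_C_mul,
      show (m + n - k - 2 - y) + 1 = m + n - k - 1 by omega, hQ]
    ring

end RowReduction

theorem eval_Fk_X_sub_C_mul {F : Type*} [Field F] {m n k : ℕ} (β : F) {f g' : F[X]}
    (hkm : k < m) (hkn : k < n) (hf : f.natDegree ≤ m) (hg' : g'.natDegree < n) :
    (Fk m n k f ((X - C β) * g')).eval β
      = (-1) ^ (m - k) * (sresCoeffMat m (n - 1) k f g').det := by
  obtain ⟨L, hL⟩ : ∃ L, m + n - 2*k = L + 1 := ⟨m + n - 2*k - 1, by omega⟩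
  have hL' : m + (n - 1) - 2*k = L := by omega
  set C' := (sresCoeffMat m (n - 1) k f g').submatrix (finCongr hL'.symm) (finCongr hL'.symm)
  have hE : ((sresMF m n k f ((X - C β) * g')).map (evalRingHom β)).submatrix
      (finCongr hL.symm) (finCongr hL.symm) = sresMFEval m n k L β f ((X - C β) * g') := by
    ext i j
    simp only [Matrix.submatrix_apply, sresMF_map_eval_apply _ _ hkn.le, finCongr_apply,
      Fin.val_cast, hL, Nat.add_sub_cancel, sresMFEval]
  have hC' : ∀ x y, C' x y = (sresRow m (n - 1) k f g' x).coeff (m + n - k - 2 - y) := by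
    intro x y
    simp only [C', sresCoeffMat, Matrix.submatrix_apply, finCongr_apply, Fin.val_cast]
    congr 1
    omega
  set E := sresMFEval m n k L β f ((X - C β) * g')
  calc (Fk m n k f ((X - C β) * g')).eval β = E.det := by
        rw [Fk, ← coe_evalRingHom, RingHom.map_det, RingHom.mapMatrix_apply, ← hE,
          Matrix.det_submatrix_equiv_self]
    _ = ((1 - superdiag (L + 1) (n - k - 1) β) * E).det := by
        rw [Matrix.det_mul, det_one_sub_superdiag, one_mul]
    _ = (-1) ^ (n - k - 1 + L) * (C' * (1 - superdiag L L β)).det := by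
        rw [det_eq_of_col_last_eq_single _ ⟨n - k - 1, by omega⟩
          (one_sub_superdiag_mul_sresMFEval_apply_last β f g' hkm hkn hL),
          one_sub_superdiag_mul_sresMFEval_submatrix β f g' hC' hkm hkn hL hf hg']
    _ = (-1) ^ (m - k) * (sresCoeffMat m (n - 1) k f g').det := by
        rw [Matrix.det_mul, det_one_sub_superdiag, mul_one, Matrix.det_submatrix_equiv_self,
          show n - k - 1 + L = (m - k) + 2 * (n - k - 1) by omega, pow_add, pow_mul, neg_one_sq,
          one_pow, mul_one]

end

theorem Sres_eval_root_g_general {F : Type*} [Field F] {m n : ℕ}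
    (A : Fin m → F) (B : Fin n → F)
    (f g : Polynomial F) (hf : f = RX A Finset.univ) (hg : g = RX B Finset.univ)
    (k : ℕ) (hk : k < min m n) (j0 : Fin n) :
    (Sres m n k f g).eval (B j0)
      = (-1 : F) ^ (m - k)
          * (Sres m (n - 1) k f (RX B (Finset.univ.erase j0))).coeff k
          * f.eval (B j0) := by
  obtain ⟨hkm, hkn⟩ := lt_min_iff.mp hk
  have hsplit : g = (X - C (B j0)) * RX B (univ.erase j0) := by
    rw [hg, RX, RX, ← mul_prod_erase _ _ (mem_univ j0)]
  have hfdeg : f.natDegree ≤ m := by simp [hf, natDegree_RX]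
  have hgdeg : (RX B (univ.erase j0)).natDegree < n := by
    rw [natDegree_RX, card_erase_of_mem (mem_univ j0), card_univ, Fintype.card_fin]
    omega
  rw [Sres_eq_mul_Fk_add_mul_Gk f g (by omega), hsplit, eval_add, eval_mul, eval_mul, eval_mul,
    eval_sub, eval_X, eval_C, sub_self, zero_mul, zero_mul, add_zero,
    eval_Fk_X_sub_C_mul _ hkm hkn hfdeg hgdeg, Sres_coeff_eq_det _ _ (by omega) (by omega)]
  ring

/-- for `0 ≤ k < min(m,n)` and `β = B j0` a root of `g`,
`Sres_k(f,g)(β) = (−1)^{m−k} coeff_k(Sres_k(f, g/(x−β))) · f(β)`, where `g/(x−β)` is the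
exact quotient `∏_{j ≠ j0} (x − β_j)` and `Sres_k` on the right is formed w.r.t.
degrees `m` and `n−1`. -/
theorem Sres_eval_root_g {F : Type*} [Field F] {m n : ℕ} (hm : 1 ≤ m) (hn : 1 ≤ n)
    (A : Fin m → F) (B : Fin n → F)
    (hA : Function.Injective A) (hB : Function.Injective B)
    (f g : Polynomial F) (hf : f = RX A Finset.univ) (hg : g = RX B Finset.univ)
    (k : ℕ) (hk : k < min m n) (j0 : Fin n) :
    (Sres m n k f g).eval (B j0)
      = (-1 : F) ^ (m - k)
          * (Sres m (n - 1) k f (RX B (Finset.univ.erase j0))).coeff k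
          * f.eval (B j0) :=
  Sres_eval_root_g_general A B f g hf hg k hk j0
end
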